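/- arXiv:2405.20116 — 3 statements merged into one kernel-verified Lean document; each statement's English description precedes it below -/
import Mathlib

section
/- Let (Ω, F, P) be a probability space with a filtration F_0 ⊆ F_1 ⊆ … where F_0 is trivial. For j ≥ 1 let D_j = X_j − Y_j, where X_j and Y_j are F_j-measurable real random variables with E[D_j | F_{j−1}] = 0 almost surely, and where for every integer m ≥ 2, E[|X_j|^m | F_{j−1}] ≤ (m!/2)·b^{m−2}·σ² and E[|Y_j|^m | F_{j−1}] ≤ (m!/2)·b^{m−2}·σ² almost surely, for constants b > 0 and σ² > 0. Suppose in addition that there exist Δ > 0 and σ_B² ≥ 4σ² with E[D_j² | F_{j−1}] ≤ Δ·σ_B² almost surely for all j. Then for every c > 0 and every n ∈ ℕ, P( Σ_{j=1}^n D_j ≥ n·c ) ≤ exp( − n·c² / (2(b_B·c + Δ·σ_B²)) ), where b_B = max{2b/Δ, 2b}. -/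
/-! The differences `X_j - Y_j` inherit a conditional Bernstein moment condition: by
`|x - y|^k ≤ 2^(k-1) (|x|^k + |y|^k)` they satisfy it with parameters `(2b, 4σ²)`, and replacing
the variance proxy `4σ²` by the conditional-variance bound `Δ σ_B²` only costs raising `2b` to
`b_B`, because `b_B ≥ 2b` and `b_B · Δ σ_B² ≥ 2b · 4σ²`. Bernstein's inequality for martingale
differences then follows by the Chernoff method: expanding `exp (t D_j)` into moments gives,
against any `F_{j-1}`-measurable weight, the conditional bound
`E[exp (t D_j) | F_{j-1}] ≤ exp (t²v / (2(1 - tb)))`, which is iterated along the filtration and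
optimised at `t = c / (bc + v)`. -/

open MeasureTheory ProbabilityTheory Real
open scoped ENNReal Nat

namespace Real

lemma exp_sub_one_sub_le_exp_abs_sub_one_sub_abs (x : ℝ) :
    exp x - 1 - x ≤ exp |x| - 1 - |x| := by
  rcases le_or_gt 0 x with hx | hx
  · rw [abs_of_nonneg hx]
  · have h := sinh_lt_self_iff.2 hx
    rw [sinh_eq] at h
    rw [abs_of_neg hx]
    linarith

lemma exp_sub_one_sub_eq_tsum (t : ℝ) :
    exp t - 1 - t = ∑' m : ℕ, t ^ (m + 2) / (m + 2)! := by
  have hs := summable_pow_div_factorial t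
  rw [exp_eq_exp_ℝ, NormedSpace.exp_eq_tsum_div]
  beta_reduce
  rw [hs.tsum_eq_zero_add, ((summable_nat_add_iff 1).2 hs).tsum_eq_zero_add]
  norm_num

lemma exp_le_two_add_two_mul_exp_sub_one_sub {t : ℝ} (ht : 0 ≤ t) :
    exp t ≤ 2 + 2 * (exp t - 1 - t) := by
  nlinarith [quadratic_le_exp_of_nonneg ht]

end Real

lemma abs_sub_pow_le (x y : ℝ) (k : ℕ) : |x - y| ^ k ≤ 2 ^ (k - 1) * (|x| ^ k + |y| ^ k) :=
  (pow_le_pow_left₀ (abs_nonneg _) (abs_sub x y) k).trans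
    (add_pow_le (abs_nonneg _) (abs_nonneg _) k)

section Bernstein

variable {Ω : Type*} {m m0 : MeasurableSpace Ω} {P : Measure Ω}

-- Integration against `m`-measurable weights cannot tell `f` from `P[f|m]`.
lemma lintegral_mul_ofReal_le_of_condExp_le [IsFiniteMeasure P] (hm : m ≤ m0) {f : Ω → ℝ}
    (hf : Integrable f P) (hf0 : 0 ≤ᵐ[P] f) {K : ℝ} (hK : 0 ≤ K)
    (hcond : ∀ᵐ ω ∂P, P[f|m] ω ≤ K) {h : Ω → ℝ≥0∞} (hh : Measurable[m] h) :
    ∫⁻ ω, h ω * ENNReal.ofReal (f ω) ∂P ≤ ENNReal.ofReal K * ∫⁻ ω, h ω ∂P := by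
  set μ := P.withDensity fun ω => ENNReal.ofReal (f ω)
  have htrim : μ.trim hm ≤ (ENNReal.ofReal K • P).trim hm := by
    refine Measure.le_iff.2 fun s hs => ?_
    rw [trim_measurableSet_eq hm hs, trim_measurableSet_eq hm hs,
      withDensity_apply _ (hm s hs),
      ← ofReal_integral_eq_lintegral_ofReal hf.restrict (ae_restrict_of_ae hf0),
      ← setIntegral_condExp hm hf hs, Measure.smul_apply, smul_eq_mul,
      ← ENNReal.ofReal_toReal (measure_ne_top P s), ← ENNReal.ofReal_mul hK]
    refine ENNReal.ofReal_le_ofReal ?_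
    simpa [measureReal_def, mul_comm] using
      setIntegral_mono_ae_restrict integrable_condExp.integrableOn
        (integrableOn_const (measure_ne_top P s)) (ae_restrict_of_ae hcond)
  calc ∫⁻ ω, h ω * ENNReal.ofReal (f ω) ∂P = ∫⁻ ω, h ω ∂(μ.trim hm) := by
        rw [lintegral_trim hm hh, lintegral_withDensity_eq_lintegral_mul₀
          hf.aemeasurable.ennreal_ofReal (hh.mono hm le_rfl).aemeasurable]
        simp only [Pi.mul_apply, mul_comm]
    _ ≤ ∫⁻ ω, h ω ∂((ENNReal.ofReal K • P).trim hm) := lintegral_mono' htrim le_rfl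
    _ = ENNReal.ofReal K * ∫⁻ ω, h ω ∂P := by
        rw [lintegral_trim hm hh, lintegral_smul_measure, smul_eq_mul]

-- Integrability is part of the condition, since `P[·|m]` of a non-integrable function is `0`.
def HasCondBernsteinMoments (m : MeasurableSpace Ω) (Z : Ω → ℝ) (b v : ℝ) (P : Measure[m0] Ω) :
    Prop :=
  ∀ k : ℕ, 2 ≤ k → Integrable (fun ω => |Z ω| ^ k) P ∧
    ∀ᵐ ω ∂P, P[fun ω' => |Z ω'| ^ k | m] ω ≤ k ! / 2 * b ^ (k - 2) * v

namespace HasCondBernsteinMoments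

variable {X Y Z : Ω → ℝ} {b v : ℝ}

lemma sub (hX : HasCondBernsteinMoments m X b v P) (hY : HasCondBernsteinMoments m Y b v P)
    (hXm : AEStronglyMeasurable X P) (hYm : AEStronglyMeasurable Y P) :
    HasCondBernsteinMoments m (fun ω => X ω - Y ω) (2 * b) (4 * v) P := by
  intro k hk
  obtain ⟨hXi, hXk⟩ := hX k hk
  obtain ⟨hYi, hYk⟩ := hY k hk
  have hsum : Integrable (fun ω => (2 : ℝ) ^ (k - 1) • (|X ω| ^ k + |Y ω| ^ k)) P :=
    (hXi.add hYi).smul ((2 : ℝ) ^ (k - 1))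
  have hle : (fun ω => |X ω - Y ω| ^ k)
      ≤ᵐ[P] fun ω => (2 : ℝ) ^ (k - 1) • (|X ω| ^ k + |Y ω| ^ k) :=
    Filter.Eventually.of_forall fun ω => abs_sub_pow_le (X ω) (Y ω) k
  have hint : Integrable (fun ω => |X ω - Y ω| ^ k) P := by
    refine hsum.mono' ((hXm.sub hYm).norm.pow k) ?_
    filter_upwards [hle] with ω hω
    rwa [Real.norm_of_nonneg (by positivity)]
  refine ⟨hint, ?_⟩
  have hlin : P[fun ω => (2 : ℝ) ^ (k - 1) • (|X ω| ^ k + |Y ω| ^ k) | m]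
      =ᵐ[P] (2 : ℝ) ^ (k - 1) • (P[fun ω => |X ω| ^ k | m] + P[fun ω => |Y ω| ^ k | m]) :=
    (condExp_smul ((2 : ℝ) ^ (k - 1)) (fun ω => |X ω| ^ k + |Y ω| ^ k) m).trans
      ((condExp_add hXi hYi m).const_smul _)
  filter_upwards [condExp_mono hint hsum hle, hlin, hXk, hYk] with ω hmono hlinω hXk hYk
  obtain ⟨j, rfl⟩ := Nat.exists_eq_add_of_le hk
  rw [hlinω] at hmono
  simp only [Pi.smul_apply, Pi.add_apply, smul_eq_mul] at hmono
  refine hmono.trans ?_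
  calc (2 : ℝ) ^ (2 + j - 1)
        * (P[fun ω => |X ω| ^ (2 + j) | m] ω + P[fun ω => |Y ω| ^ (2 + j) | m] ω)
      ≤ 2 ^ (2 + j - 1)
        * ((2 + j)! / 2 * b ^ (2 + j - 2) * v + (2 + j)! / 2 * b ^ (2 + j - 2) * v) := by
        gcongr
    _ = (2 + j)! / 2 * (2 * b) ^ (2 + j - 2) * (4 * v) := by
        simp only [Nat.add_sub_cancel_left, show 2 + j - 1 = j + 1 by omega]
        ring

lemma of_condExp_sq_le {b' v' : ℝ} (hZ : HasCondBernsteinMoments m Z b' v' P)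
    (hsq : ∀ᵐ ω ∂P, P[fun ω' => Z ω' ^ 2 | m] ω ≤ v) (hb' : 0 ≤ b') (hbb' : b' ≤ b)
    (hv' : 0 ≤ v') (hbv : b' * v' ≤ b * v) :
    HasCondBernsteinMoments m Z b v P := by
  intro k hk
  refine ⟨(hZ k hk).1, ?_⟩
  obtain ⟨j, rfl⟩ := Nat.exists_eq_add_of_le hk
  rcases j with _ | j
  · simpa [sq_abs] using hsq
  have hb : 0 ≤ b := hb'.trans hbb'
  have hpow : b' ^ (2 + (j + 1) - 2) * v' ≤ b ^ (2 + (j + 1) - 2) * v :=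
    calc b' ^ (2 + (j + 1) - 2) * v' = b' ^ j * (b' * v') := by
          rw [show 2 + (j + 1) - 2 = j + 1 by omega]; ring
      _ ≤ b ^ j * (b * v) := by gcongr
      _ = b ^ (2 + (j + 1) - 2) * v := by
          rw [show 2 + (j + 1) - 2 = j + 1 by omega]; ring
  filter_upwards [(hZ _ hk).2] with ω hω
  refine hω.trans ?_
  rw [mul_assoc, mul_assoc]
  gcongr

end HasCondBernsteinMoments

section FiniteMeasure

variable [IsFiniteMeasure P] {Z R : Ω → ℝ} {b v t : ℝ}

lemma lintegral_mul_ofReal_exp_sub_one_sub_le (hm : m ≤ m0)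
    (hZ : HasCondBernsteinMoments m Z b v P) (hZm : AEMeasurable Z P) (hb : 0 ≤ b) (hv : 0 ≤ v)
    (ht : 0 ≤ t) (htb : t * b < 1) {h : Ω → ℝ≥0∞} (hh : Measurable[m] h) :
    ∫⁻ ω, h ω * ENNReal.ofReal (exp (t * |Z ω|) - 1 - t * |Z ω|) ∂P
      ≤ ENNReal.ofReal (t ^ 2 * v / (2 * (1 - t * b))) * ∫⁻ ω, h ω ∂P := by
  have hseries : ∀ ω, h ω * ENNReal.ofReal (exp (t * |Z ω|) - 1 - t * |Z ω|)
      = ∑' j : ℕ, ENNReal.ofReal (t ^ (j + 2) / (j + 2)!) *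
          (h ω * ENNReal.ofReal (|Z ω| ^ (j + 2))) := fun ω => by
    rw [exp_sub_one_sub_eq_tsum, ENNReal.ofReal_tsum_of_nonneg (fun j => by positivity)
      ((summable_nat_add_iff 2).2 (summable_pow_div_factorial _)), ← ENNReal.tsum_mul_left]
    refine tsum_congr fun j => ?_
    rw [mul_pow, mul_div_right_comm, ENNReal.ofReal_mul (by positivity)]
    ring
  have hterm : ∀ j : ℕ, ∫⁻ ω, ENNReal.ofReal (t ^ (j + 2) / (j + 2)!) *
      (h ω * ENNReal.ofReal (|Z ω| ^ (j + 2))) ∂P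
        ≤ ENNReal.ofReal (t ^ 2 * v / 2 * (t * b) ^ j) * ∫⁻ ω, h ω ∂P := fun j => by
    obtain ⟨hint, hmom⟩ := hZ (j + 2) (by omega)
    rw [lintegral_const_mul' _ _ ENNReal.ofReal_ne_top]
    calc ENNReal.ofReal (t ^ (j + 2) / (j + 2)!) * ∫⁻ ω, h ω * ENNReal.ofReal (|Z ω| ^ (j + 2)) ∂P
        ≤ ENNReal.ofReal (t ^ (j + 2) / (j + 2)!) *
            (ENNReal.ofReal ((j + 2)! / 2 * b ^ j * v) * ∫⁻ ω, h ω ∂P) := by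
          gcongr
          exact lintegral_mul_ofReal_le_of_condExp_le hm hint
            (Filter.Eventually.of_forall fun ω => by positivity) (by positivity)
            (by simpa using hmom) hh
      _ = ENNReal.ofReal (t ^ 2 * v / 2 * (t * b) ^ j) * ∫⁻ ω, h ω ∂P := by
          rw [← mul_assoc, ← ENNReal.ofReal_mul (by positivity)]
          congr 2
          field_simp
          ring
  have hgeom : HasSum (fun j : ℕ => t ^ 2 * v / 2 * (t * b) ^ j)
      (t ^ 2 * v / (2 * (1 - t * b))) := by
    have := (hasSum_geometric_of_lt_one (by positivity) htb).mul_left (t ^ 2 * v / 2)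
    rwa [← div_eq_mul_inv, div_div] at this
  calc ∫⁻ ω, h ω * ENNReal.ofReal (exp (t * |Z ω|) - 1 - t * |Z ω|) ∂P
      = ∑' j : ℕ, ∫⁻ ω, ENNReal.ofReal (t ^ (j + 2) / (j + 2)!) *
          (h ω * ENNReal.ofReal (|Z ω| ^ (j + 2))) ∂P := by
        simp_rw [hseries]
        exact lintegral_tsum fun j =>
          ((hh.mono hm le_rfl).aemeasurable.mul (hZm.abs.pow_const _).ennreal_ofReal).const_mul _
    _ ≤ ∑' j : ℕ, ENNReal.ofReal (t ^ 2 * v / 2 * (t * b) ^ j) * ∫⁻ ω, h ω ∂P :=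
        ENNReal.tsum_le_tsum hterm
    _ = ENNReal.ofReal (t ^ 2 * v / (2 * (1 - t * b))) * ∫⁻ ω, h ω ∂P := by
        rw [ENNReal.tsum_mul_right, ← ENNReal.ofReal_tsum_of_nonneg (fun j => by positivity)
          hgeom.summable, hgeom.tsum_eq]

lemma integral_mul_exp_sub_one_sub_le (hm : m ≤ m0)
    (hZ : HasCondBernsteinMoments m Z b v P) (hZm : AEStronglyMeasurable Z P) (hb : 0 ≤ b)
    (hv : 0 ≤ v) (ht : 0 ≤ t) (htb : t * b < 1) (hR : StronglyMeasurable[m] R) (hR0 : 0 ≤ R)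
    (hRint : Integrable R P) :
    Integrable (fun ω => R ω * (exp (t * |Z ω|) - 1 - t * |Z ω|)) P ∧
      ∫ ω, R ω * (exp (t * |Z ω|) - 1 - t * |Z ω|) ∂P
        ≤ t ^ 2 * v / (2 * (1 - t * b)) * ∫ ω, R ω ∂P := by
  have hr0 : ∀ ω, 0 ≤ R ω * (exp (t * |Z ω|) - 1 - t * |Z ω|) := fun ω =>
    mul_nonneg (hR0 ω) (by linarith [add_one_le_exp (t * |Z ω|)])
  have hmeas : AEStronglyMeasurable (fun ω => R ω * (exp (t * |Z ω|) - 1 - t * |Z ω|)) P :=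
    (hR.mono hm).aestronglyMeasurable.mul
      ((((hZm.norm.const_mul t).aemeasurable.exp).sub_const 1).sub
        (hZm.norm.const_mul t).aemeasurable).aestronglyMeasurable
  have hlin : ∫⁻ ω, ENNReal.ofReal (R ω * (exp (t * |Z ω|) - 1 - t * |Z ω|)) ∂P
      ≤ ENNReal.ofReal (t ^ 2 * v / (2 * (1 - t * b))) * ENNReal.ofReal (∫ ω, R ω ∂P) := by
    rw [ofReal_integral_eq_lintegral_ofReal hRint (Filter.Eventually.of_forall hR0)]
    simp_rw [ENNReal.ofReal_mul (hR0 _)]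
    exact lintegral_mul_ofReal_exp_sub_one_sub_le hm hZ hZm.aemeasurable hb hv ht htb
      (hR.measurable.ennreal_ofReal)
  have hint : Integrable (fun ω => R ω * (exp (t * |Z ω|) - 1 - t * |Z ω|)) P :=
    (lintegral_ofReal_ne_top_iff_integrable hmeas (Filter.Eventually.of_forall hr0)).1
      (hlin.trans_lt (by finiteness)).ne
  refine ⟨hint, ?_⟩
  have hC : 0 ≤ t ^ 2 * v / (2 * (1 - t * b)) := div_nonneg (by positivity) (by linarith)
  rw [← ENNReal.ofReal_le_ofReal_iff (mul_nonneg hC (integral_nonneg hR0)), ENNReal.ofReal_mul hC,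
    ofReal_integral_eq_lintegral_ofReal hint (Filter.Eventually.of_forall hr0)]
  exact hlin

lemma integral_mul_exp_le_of_hasCondBernsteinMoments (hm : m ≤ m0)
    (hZ : HasCondBernsteinMoments m Z b v P) (hZint : Integrable Z P) (hmean : P[Z|m] =ᵐ[P] 0)
    (hb : 0 ≤ b) (hv : 0 ≤ v) (ht : 0 < t) (htb : t * b < 1) (hR : StronglyMeasurable[m] R)
    (hR0 : 0 ≤ R) (hRint : Integrable R P) :
    Integrable (fun ω => R ω * exp (t * Z ω)) P ∧
      ∫ ω, R ω * exp (t * Z ω) ∂P ≤ exp (t ^ 2 * v / (2 * (1 - t * b))) * ∫ ω, R ω ∂P := by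
  set C := t ^ 2 * v / (2 * (1 - t * b))
  obtain ⟨hRr, hRr_le⟩ := integral_mul_exp_sub_one_sub_le hm hZ hZint.1 hb hv ht.le htb hR hR0 hRint
  have hRm : AEStronglyMeasurable R P := (hR.mono hm).aestronglyMeasurable
  have hexp_abs : Integrable (fun ω => R ω * exp (t * |Z ω|)) P := by
    refine ((hRint.const_mul 2).add (hRr.const_mul 2)).mono'
      (hRm.mul (hZint.1.norm.const_mul t).aemeasurable.exp.aestronglyMeasurable)
      (Filter.Eventually.of_forall fun ω => ?_)
    rw [norm_of_nonneg (mul_nonneg (hR0 ω) (exp_pos _).le)]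
    have := exp_le_two_add_two_mul_exp_sub_one_sub (mul_nonneg ht.le (abs_nonneg (Z ω)))
    simp only [Pi.add_apply]
    nlinarith [mul_le_mul_of_nonneg_left this (hR0 ω)]
  have hRZ : Integrable (fun ω => R ω * Z ω) P := by
    refine (hexp_abs.div_const t).mono' (hRm.mul hZint.1) (Filter.Eventually.of_forall fun ω => ?_)
    rw [norm_mul, norm_of_nonneg (hR0 ω), Real.norm_eq_abs, le_div_iff₀ ht, mul_assoc]
    gcongr
    · exact hR0 ω
    linarith [add_one_le_exp (t * |Z ω|), abs_nonneg (Z ω)]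
  have hRZ_zero : ∫ ω, R ω * Z ω ∂P = 0 := by
    have hpull : P[fun ω => R ω * Z ω|m] =ᵐ[P] 0 := by
      filter_upwards [condExp_mul_of_stronglyMeasurable_left hR hRZ hZint, hmean] with ω h1 h2
      rw [show (fun ω => R ω * Z ω) = R * Z from rfl, h1, Pi.mul_apply, h2, Pi.zero_apply,
        mul_zero]
    rw [← integral_condExp hm, integral_congr_ae hpull, integral_zero']
  have hpt : ∀ ω, R ω * exp (t * Z ω)
      ≤ R ω + t * (R ω * Z ω) + R ω * (exp (t * |Z ω|) - 1 - t * |Z ω|) := fun ω => by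
    have := exp_sub_one_sub_le_exp_abs_sub_one_sub_abs (t * Z ω)
    rw [abs_mul, abs_of_pos ht] at this
    nlinarith [mul_le_mul_of_nonneg_left this (hR0 ω)]
  have hint : Integrable (fun ω => R ω * exp (t * Z ω)) P := by
    refine hexp_abs.mono' (hRm.mul (hZint.1.const_mul t).aemeasurable.exp.aestronglyMeasurable)
      (Filter.Eventually.of_forall fun ω => ?_)
    rw [norm_of_nonneg (mul_nonneg (hR0 ω) (exp_pos _).le)]
    gcongr
    · exact hR0 ω
    exact le_abs_self _
  refine ⟨hint, ?_⟩
  have hRtRZ : Integrable (fun ω => R ω + t * (R ω * Z ω)) P := hRint.add (hRZ.const_mul t)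
  calc ∫ ω, R ω * exp (t * Z ω) ∂P
      ≤ ∫ ω, (R ω + t * (R ω * Z ω) + R ω * (exp (t * |Z ω|) - 1 - t * |Z ω|)) ∂P :=
        integral_mono hint (hRtRZ.add hRr) hpt
    _ = ∫ ω, R ω ∂P + t * ∫ ω, R ω * Z ω ∂P
          + ∫ ω, R ω * (exp (t * |Z ω|) - 1 - t * |Z ω|) ∂P := by
        rw [integral_add hRtRZ hRr, integral_add hRint (hRZ.const_mul t), integral_const_mul]
    _ ≤ (1 + C) * ∫ ω, R ω ∂P := by rw [hRZ_zero]; linarith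
    _ ≤ exp C * ∫ ω, R ω ∂P := by
        gcongr
        · exact integral_nonneg hR0
        linarith [add_one_le_exp C]

end FiniteMeasure

end Bernstein

section Martingale

variable {Ω : Type*} {m0 : MeasurableSpace Ω} {P : Measure Ω} [IsProbabilityMeasure P]
  {𝓕 : Filtration ℕ m0} {D : ℕ → Ω → ℝ} {b v t : ℝ}

lemma mgf_sum_Icc_le_of_hasCondBernsteinMoments
    (hD : ∀ j, 1 ≤ j → StronglyMeasurable[𝓕 j] (D j))
    (hDint : ∀ j, 1 ≤ j → Integrable (D j) P)
    (hmean : ∀ j, 1 ≤ j → P[D j | 𝓕 (j - 1)] =ᵐ[P] 0)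
    (hBern : ∀ j, 1 ≤ j → HasCondBernsteinMoments (𝓕 (j - 1)) (D j) b v P)
    (hb : 0 ≤ b) (hv : 0 ≤ v) (ht : 0 < t) (htb : t * b < 1) (n : ℕ) :
    Integrable (fun ω => exp (t * ∑ j ∈ Finset.Icc 1 n, D j ω)) P ∧
      mgf (fun ω => ∑ j ∈ Finset.Icc 1 n, D j ω) P t
        ≤ exp (n * (t ^ 2 * v / (2 * (1 - t * b)))) := by
  induction n with
  | zero => simp [mgf]
  | succ n ih =>
    obtain ⟨hint, hle⟩ := ih
    have hj : 1 ≤ n + 1 := Nat.le_add_left 1 n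
    have hS : StronglyMeasurable[𝓕 n] fun ω => ∑ j ∈ Finset.Icc 1 n, D j ω :=
      Finset.stronglyMeasurable_fun_sum _ fun j hjn =>
        (hD j (Finset.mem_Icc.1 hjn).1).mono (𝓕.mono (Finset.mem_Icc.1 hjn).2)
    have hsplit : (fun ω => exp (t * ∑ j ∈ Finset.Icc 1 (n + 1), D j ω))
        = fun ω => exp (t * ∑ j ∈ Finset.Icc 1 n, D j ω) * exp (t * D (n + 1) ω) := by
      funext ω
      rw [Finset.sum_Icc_succ_top hj, mul_add, exp_add]
    obtain ⟨hint', hle'⟩ := integral_mul_exp_le_of_hasCondBernsteinMoments (𝓕.le n)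
      (hBern (n + 1) hj) (hDint (n + 1) hj) (hmean (n + 1) hj) hb hv ht htb
      (hS.measurable.const_mul t).exp.stronglyMeasurable (fun ω => (exp_pos _).le) hint
    refine ⟨hsplit ▸ hint', ?_⟩
    rw [mgf, hsplit]
    calc _ ≤ _ := hle'
      _ ≤ exp (t ^ 2 * v / (2 * (1 - t * b))) * exp (n * (t ^ 2 * v / (2 * (1 - t * b)))) := by
          gcongr; exact hle
      _ = exp ((n + 1 : ℕ) * (t ^ 2 * v / (2 * (1 - t * b)))) := by
          rw [← exp_add]; push_cast; ring_nf

theorem measure_sum_ge_le_of_hasCondBernsteinMoments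
    (hD : ∀ j, 1 ≤ j → StronglyMeasurable[𝓕 j] (D j))
    (hDint : ∀ j, 1 ≤ j → Integrable (D j) P)
    (hmean : ∀ j, 1 ≤ j → P[D j | 𝓕 (j - 1)] =ᵐ[P] 0)
    (hBern : ∀ j, 1 ≤ j → HasCondBernsteinMoments (𝓕 (j - 1)) (D j) b v P)
    (hb : 0 ≤ b) (hv : 0 < v) {c : ℝ} (hc : 0 < c) (n : ℕ) :
    P {ω | (n : ℝ) * c ≤ ∑ j ∈ Finset.Icc 1 n, D j ω}
      ≤ ENNReal.ofReal (exp (-((n : ℝ) * c ^ 2 / (2 * (b * c + v))))) := by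
  have hS : 0 < b * c + v := by positivity
  -- the optimal Chernoff parameter
  set t := c / (b * c + v) with ht_def
  have hvS : 1 - t * b = v / (b * c + v) := by rw [ht_def]; field_simp; ring
  have htb : t * b < 1 := by linarith [div_pos hv hS]
  obtain ⟨hint, hmgf⟩ := mgf_sum_Icc_le_of_hasCondBernsteinMoments hD hDint hmean hBern hb hv.le
    (div_pos hc hS) htb n
  rw [← ofReal_measureReal]
  refine ENNReal.ofReal_le_ofReal ((measure_ge_le_exp_mul_mgf _ (div_pos hc hS).le hint).trans ?_)
  calc exp (-t * (n * c)) * mgf (fun ω => ∑ j ∈ Finset.Icc 1 n, D j ω) P t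
      ≤ exp (-t * (n * c)) * exp (n * (t ^ 2 * v / (2 * (1 - t * b)))) := by gcongr
    _ = exp (-((n : ℝ) * c ^ 2 / (2 * (b * c + v)))) := by
        rw [← exp_add, hvS, ht_def]
        congr 1
        field_simp
        ring

end Martingale

theorem stmt_5_general
    {Ω : Type*} {m0 : MeasurableSpace Ω} (P : Measure Ω) [IsProbabilityMeasure P]
    (𝓕 : Filtration ℕ m0)
    (X Y : ℕ → Ω → ℝ) (b σ : ℝ) (hb : 0 < b) (hσ : 0 < σ ^ 2)
    (hXadapted : ∀ j, 1 ≤ j → StronglyMeasurable[𝓕 j] (X j))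
    (hYadapted : ∀ j, 1 ≤ j → StronglyMeasurable[𝓕 j] (Y j))
    (hDint : ∀ j, 1 ≤ j → Integrable (fun ω => X j ω - Y j ω) P)
    (hmean : ∀ j, 1 ≤ j → P[fun ω => X j ω - Y j ω | 𝓕 (j - 1)] =ᵐ[P] 0)
    (hXint : ∀ j, 1 ≤ j → ∀ m : ℕ, 2 ≤ m → Integrable (fun ω => |X j ω| ^ m) P)
    (hYint : ∀ j, 1 ≤ j → ∀ m : ℕ, 2 ≤ m → Integrable (fun ω => |Y j ω| ^ m) P)
    (hXmom : ∀ j, 1 ≤ j → ∀ m : ℕ, 2 ≤ m →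
      ∀ᵐ ω ∂P, (P[fun ω' => |X j ω'| ^ m | 𝓕 (j - 1)]) ω
        ≤ (m.factorial : ℝ) / 2 * b ^ (m - 2) * σ ^ 2)
    (hYmom : ∀ j, 1 ≤ j → ∀ m : ℕ, 2 ≤ m →
      ∀ᵐ ω ∂P, (P[fun ω' => |Y j ω'| ^ m | 𝓕 (j - 1)]) ω
        ≤ (m.factorial : ℝ) / 2 * b ^ (m - 2) * σ ^ 2)
    (Δ σB2 : ℝ) (hΔ : 0 < Δ) (hσB : 4 * σ ^ 2 ≤ σB2)
    (hcondvar : ∀ j, 1 ≤ j →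
      ∀ᵐ ω ∂P, (P[fun ω' => (X j ω' - Y j ω') ^ 2 | 𝓕 (j - 1)]) ω ≤ Δ * σB2) :
    ∀ c : ℝ, 0 < c → ∀ n : ℕ,
      P {ω | (n : ℝ) * c ≤ ∑ j ∈ Finset.Icc 1 n, (X j ω - Y j ω)}
        ≤ ENNReal.ofReal (Real.exp (-((n : ℝ) * c ^ 2
            / (2 * (max (2 * b / Δ) (2 * b) * c + Δ * σB2))))) := by
  intro c hc n
  have hbB : 2 * b ≤ Δ * max (2 * b / Δ) (2 * b) :=
    (div_le_iff₀' hΔ).1 (le_max_left _ _)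
  have hσB2 : 0 < σB2 := by linarith
  have hprod : 2 * b * (4 * σ ^ 2) ≤ max (2 * b / Δ) (2 * b) * (Δ * σB2) :=
    calc 2 * b * (4 * σ ^ 2) ≤ Δ * max (2 * b / Δ) (2 * b) * σB2 :=
          mul_le_mul hbB hσB (by positivity) (by positivity)
      _ = max (2 * b / Δ) (2 * b) * (Δ * σB2) := by ring
  have hBern : ∀ j, 1 ≤ j → HasCondBernsteinMoments (𝓕 (j - 1)) (fun ω => X j ω - Y j ω)
      (max (2 * b / Δ) (2 * b)) (Δ * σB2) P := fun j hj =>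
    ((HasCondBernsteinMoments.sub (fun k hk => ⟨hXint j hj k hk, hXmom j hj k hk⟩)
        (fun k hk => ⟨hYint j hj k hk, hYmom j hj k hk⟩)
        ((hXadapted j hj).mono (𝓕.le j)).aestronglyMeasurable
        ((hYadapted j hj).mono (𝓕.le j)).aestronglyMeasurable).of_condExp_sq_le
      (hcondvar j hj) (by positivity) (le_max_right _ _) (by positivity) hprod)
  exact measure_sum_ge_le_of_hasCondBernsteinMoments
    (fun j hj => (hXadapted j hj).sub (hYadapted j hj)) hDint hmean hBern
    ((by positivity : (0 : ℝ) ≤ 2 * b).trans (le_max_right _ _)) (mul_pos hΔ hσB2) hc n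

/-- **Bernstein bound for CRN observation-error differences.** If
`D j = X j − Y j` is a martingale difference sequence where `X j` and `Y j`
each satisfy the conditional Bernstein moment condition with parameters
`(b, σ²)` and the conditional variance of `D j` is at most `Δ σ_B²` with
`σ_B² ≥ 4σ²`, then `P(∑_{j=1}^n D j ≥ n c) ≤ exp(−n c²/(2(b_B c + Δ σ_B²)))`
with `b_B = max{2b/Δ, 2b}`. -/
theorem stmt_5
    {Ω : Type*} {m0 : MeasurableSpace Ω} (P : Measure Ω) [IsProbabilityMeasure P]
    (𝓕 : Filtration ℕ m0) (h0 : 𝓕 0 = ⊥)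
    (X Y : ℕ → Ω → ℝ) (b σ : ℝ) (hb : 0 < b) (hσ : 0 < σ ^ 2)
    (hXadapted : ∀ j, 1 ≤ j → StronglyMeasurable[𝓕 j] (X j))
    (hYadapted : ∀ j, 1 ≤ j → StronglyMeasurable[𝓕 j] (Y j))
    (hDint : ∀ j, 1 ≤ j → Integrable (fun ω => X j ω - Y j ω) P)
    (hmean : ∀ j, 1 ≤ j → P[fun ω => X j ω - Y j ω | 𝓕 (j - 1)] =ᵐ[P] 0)
    (hXint : ∀ j, 1 ≤ j → ∀ m : ℕ, 2 ≤ m → Integrable (fun ω => |X j ω| ^ m) P)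
    (hYint : ∀ j, 1 ≤ j → ∀ m : ℕ, 2 ≤ m → Integrable (fun ω => |Y j ω| ^ m) P)
    (hXmom : ∀ j, 1 ≤ j → ∀ m : ℕ, 2 ≤ m →
      ∀ᵐ ω ∂P, (P[fun ω' => |X j ω'| ^ m | 𝓕 (j - 1)]) ω
        ≤ (m.factorial : ℝ) / 2 * b ^ (m - 2) * σ ^ 2)
    (hYmom : ∀ j, 1 ≤ j → ∀ m : ℕ, 2 ≤ m →
      ∀ᵐ ω ∂P, (P[fun ω' => |Y j ω'| ^ m | 𝓕 (j - 1)]) ω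
        ≤ (m.factorial : ℝ) / 2 * b ^ (m - 2) * σ ^ 2)
    (Δ σB2 : ℝ) (hΔ : 0 < Δ) (hσB : 4 * σ ^ 2 ≤ σB2)
    (hcondvar : ∀ j, 1 ≤ j →
      ∀ᵐ ω ∂P, (P[fun ω' => (X j ω' - Y j ω') ^ 2 | 𝓕 (j - 1)]) ω ≤ Δ * σB2) :
    ∀ c : ℝ, 0 < c → ∀ n : ℕ,
      P {ω | (n : ℝ) * c ≤ ∑ j ∈ Finset.Icc 1 n, (X j ω - Y j ω)}
        ≤ ENNReal.ofReal (Real.exp (-((n : ℝ) * c ^ 2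
            / (2 * (max (2 * b / Δ) (2 * b) * c + Δ * σB2))))) :=
  stmt_5_general P 𝓕 X Y b σ hb hσ hXadapted hYadapted hDint hmean hXint hYint hXmom hYmom Δ σB2 hΔ
    hσB hcondvar
end

section
/- Let f : ℝ^d → ℝ be continuously differentiable with ∇f Lipschitz of constant κ_{Lg} > 0, let η ∈ (0,1), κ_{fcd} ∈ (0,1], κ_H > 0, κ_{fde} > 0, κ_{ge} > 0, and set κ_{dum} = (1−η)·κ_{fcd} / ( κ_H + 2κ_{fde} + 2κ_{ge} + κ_{Lg} ). Let x, s ∈ ℝ^d with 0 < ‖s‖ ≤ Δ, let g ∈ ℝ^d with ‖g − ∇f(x)‖ ≤ κ_{ge}·Δ, let B be symmetric with ‖B‖ ≤ κ_H, let F̄⁰, F̄ˢ ∈ ℝ satisfy |(F̄⁰ − f(x)) − (F̄ˢ − f(x+s))| ≤ κ_{fde}·Δ², and define M⁰ = F̄⁰ and Mˢ = F̄⁰ + gᵀs + (1/2)·sᵀBs. Suppose the Cauchy decrease condition M⁰ − Mˢ ≥ (κ_{fcd}/2)·‖g‖·min( ‖g‖/κ_H , Δ ) holds, and suppose Δ ≤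 κ_{dum}·‖g‖. Then the success ratio ρ̂ = (F̄ˢ − F̄⁰)/(Mˢ − M⁰) satisfies ρ̂ ≥ η. -/
/-! The model error `F̄ˢ - Mˢ` splits into the first-order Taylor remainder of `f` (at most
`κ_{Lg}/2 ‖s‖²` since `∇f` is Lipschitz), the gradient error, the curvature term and the
estimation error, so `|F̄ˢ - Mˢ| ≤ (κ_H + 2κ_{fde} + 2κ_{ge} + κ_{Lg})/2 · Δ²`. When
`Δ ≤ κ_{dum}‖g‖`, the bound `κ_{dum} κ_H ≤ 1` makes the minimum in the Cauchy decrease equal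
to `Δ`, and `(1 - η)` times that decrease then dominates the model error, which is `ρ̂ ≥ η`. -/

open InnerProductSpace Set

section InnerProductSpace

variable {E : Type*} [NormedAddCommGroup E] [InnerProductSpace ℝ E] [CompleteSpace E]

theorem abs_sub_sub_inner_gradient_le {f : E → ℝ} {L : ℝ} (hf : Differentiable ℝ f)
    (hLip : ∀ x₁ x₂, ‖gradient f x₁ - gradient f x₂‖ ≤ L * ‖x₁ - x₂‖) (x s : E) :
    |f (x + s) - f x - ⟪gradient f x, s⟫_ℝ| ≤ L / 2 * ‖s‖ ^ 2 := by
  set ψ : ℝ → ℝ := fun t => f (x + t • s) - f x - t * ⟪gradient f x, s⟫_ℝ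
  have hψ : ∀ t, HasDerivAt ψ ⟪gradient f (x + t • s) - gradient f x, s⟫_ℝ t := by
    intro t
    have hline : HasDerivAt (fun t : ℝ => x + t • s) s t := by
      simpa using ((hasDerivAt_id t).smul_const s).const_add x
    have hcomp := (hf (x + t • s)).hasGradientAt.hasFDerivAt.comp_hasDerivAt t hline
    have h := (hcomp.sub_const (f x)).sub ((hasDerivAt_id t).mul_const ⟪gradient f x, s⟫_ℝ)
    rwa [toDual_apply_apply, one_mul, ← inner_sub_left] at h
  have hbound : ∀ t ∈ Ico (0 : ℝ) 1,
      ‖⟪gradient f (x + t • s) - gradient f x, s⟫_ℝ‖ ≤ L * t * ‖s‖ ^ 2 := by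
    intro t ht
    calc ‖⟪gradient f (x + t • s) - gradient f x, s⟫_ℝ‖
        ≤ ‖gradient f (x + t • s) - gradient f x‖ * ‖s‖ := norm_inner_le_norm _ _
      _ ≤ L * ‖x + t • s - x‖ * ‖s‖ := by gcongr; exact hLip _ _
      _ = L * t * ‖s‖ ^ 2 := by
        rw [add_sub_cancel_left, norm_smul, Real.norm_of_nonneg ht.1]; ring
  have hfence : ∀ t, HasDerivAt (fun t : ℝ => L / 2 * t ^ 2 * ‖s‖ ^ 2) (L * t * ‖s‖ ^ 2) t :=
    fun t => (((hasDerivAt_pow 2 t).const_mul (L / 2)).mul_const (‖s‖ ^ 2)).congr_deriv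
      (by rw [Nat.cast_ofNat, pow_one]; ring)
  have := image_norm_le_of_norm_deriv_right_le_deriv_boundary
    (fun t _ => (hψ t).continuousAt.continuousWithinAt) (fun t _ => (hψ t).hasDerivWithinAt)
    (by simp [ψ]) hfence hbound (right_mem_Icc.2 zero_le_one)
  simpa [ψ] using this

theorem abs_sub_quadratic_model_le {f : E → ℝ} {L κH κfde κge Δ F0 Fs : ℝ} {x s g : E}
    {B : E →L[ℝ] E} (hf : Differentiable ℝ f)
    (hLip : ∀ x₁ x₂, ‖gradient f x₁ - gradient f x₂‖ ≤ L * ‖x₁ - x₂‖) (hL : 0 ≤ L)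
    (hsΔ : ‖s‖ ≤ Δ) (hg : ‖g - gradient f x‖ ≤ κge * Δ) (hB : ‖B‖ ≤ κH)
    (herr : |(F0 - f x) - (Fs - f (x + s))| ≤ κfde * Δ ^ 2) :
    |Fs - (F0 + ⟪g, s⟫_ℝ + 1 / 2 * ⟪s, B s⟫_ℝ)| ≤ (κH + 2 * κfde + 2 * κge + L) / 2 * Δ ^ 2 := by
  have hΔ : 0 ≤ Δ := (norm_nonneg s).trans hsΔ
  have htaylor : |f (x + s) - f x - ⟪gradient f x, s⟫_ℝ| ≤ L / 2 * Δ ^ 2 :=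
    (abs_sub_sub_inner_gradient_le hf hLip x s).trans (by gcongr)
  have hgrad : |⟪g - gradient f x, s⟫_ℝ| ≤ κge * Δ ^ 2 :=
    calc |⟪g - gradient f x, s⟫_ℝ| ≤ ‖g - gradient f x‖ * ‖s‖ := abs_real_inner_le_norm _ _
      _ ≤ κge * Δ * Δ := by gcongr; exact (norm_nonneg _).trans hg
      _ = κge * Δ ^ 2 := by ring
  have hhess : |⟪s, B s⟫_ℝ| ≤ κH * Δ ^ 2 :=
    calc |⟪s, B s⟫_ℝ| ≤ ‖s‖ * ‖B s‖ := abs_real_inner_le_norm _ _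
      _ ≤ ‖s‖ * (‖B‖ * ‖s‖) := by gcongr; exact B.le_opNorm s
      _ ≤ Δ * (κH * Δ) := by gcongr; exact (norm_nonneg B).trans hB
      _ = κH * Δ ^ 2 := by ring
  rw [inner_sub_left] at hgrad
  rw [abs_le] at *
  constructor <;> linarith

end InnerProductSpace

theorem le_div_of_abs_sub_le_mul {η F0 Fs M0 Ms : ℝ} (hM0 : M0 = F0) (hpos : 0 < M0 - Ms)
    (h : |Fs - Ms| ≤ (1 - η) * (M0 - Ms)) : η ≤ (Fs - F0) / (Ms - M0) := by
  rw [← neg_div_neg_eq, le_div_iff₀ (by linarith)]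
  nlinarith [(abs_le.1 h).2]

theorem cauchy_bound_ge_of_radius_le {D η κfcd κH Δ γ : ℝ} (hD : 0 < D) (hκH : 0 < κH)
    (hκHD : κH ≤ D) (hη0 : 0 ≤ η) (hη1 : η ≤ 1) (hκfcd : κfcd ≤ 1) (hγ : 0 ≤ γ) (hΔ : 0 ≤ Δ)
    (hΔγ : Δ ≤ (1 - η) * κfcd / D * γ) :
    D / 2 * Δ ^ 2 ≤ (1 - η) * (κfcd / 2 * γ * min (γ / κH) Δ) := by
  have hDΔ : D * Δ ≤ (1 - η) * κfcd * γ := by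
    rwa [div_mul_eq_mul_div, le_div_iff₀ hD, mul_comm] at hΔγ
  have hmin : min (γ / κH) Δ = Δ := by
    have hc : (1 - η) * κfcd ≤ 1 := by nlinarith
    refine min_eq_right ((le_div_iff₀ hκH).2 ?_)
    nlinarith [mul_le_mul_of_nonneg_left hκHD hΔ, mul_le_mul_of_nonneg_right hc hγ]
  rw [hmin]
  nlinarith [mul_le_mul_of_nonneg_right hDΔ hΔ]

theorem stmt_11_general
    (d : ℕ) (f : EuclideanSpace ℝ (Fin d) → ℝ)
    (κLg : ℝ) (hκLg : 0 < κLg)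
    (hf : ContDiff ℝ 1 f)
    (hLip : ∀ x₁ x₂ : EuclideanSpace ℝ (Fin d),
      ‖gradient f x₁ - gradient f x₂‖ ≤ κLg * ‖x₁ - x₂‖)
    (η κfcd κH κfde κge : ℝ)
    (hη : η ∈ Set.Ioo (0 : ℝ) 1) (hκfcd : κfcd ∈ Set.Ioc (0 : ℝ) 1)
    (hκH : 0 < κH) (hκfde : 0 < κfde) (hκge : 0 < κge)
    (κdum : ℝ) (hκdum : κdum = (1 - η) * κfcd / (κH + 2 * κfde + 2 * κge + κLg))
    (Δ : ℝ) (x s : EuclideanSpace ℝ (Fin d)) (hs0 : 0 < ‖s‖) (hsΔ : ‖s‖ ≤ Δ)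
    (g : EuclideanSpace ℝ (Fin d)) (hg : ‖g - gradient f x‖ ≤ κge * Δ)
    (B : EuclideanSpace ℝ (Fin d) →L[ℝ] EuclideanSpace ℝ (Fin d))
    (hB : ‖B‖ ≤ κH)
    (F0 Fs : ℝ)
    (herr : |(F0 - f x) - (Fs - f (x + s))| ≤ κfde * Δ ^ 2)
    (M0 Ms : ℝ) (hM0 : M0 = F0)
    (hMs : Ms = F0 + (inner ℝ g s : ℝ) + (1 / 2 : ℝ) * (inner ℝ s (B s) : ℝ))
    (hCauchy : M0 - Ms ≥ κfcd / 2 * ‖g‖ * min (‖g‖ / κH) Δ)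
    (hΔg : Δ ≤ κdum * ‖g‖) :
    η ≤ (Fs - F0) / (Ms - M0) := by
  obtain ⟨hη0, hη1⟩ := hη
  have hΔ : 0 < Δ := hs0.trans_le hsΔ
  set D := κH + 2 * κfde + 2 * κge + κLg
  have hD : 0 < D := by positivity
  have hdec : D / 2 * Δ ^ 2 ≤ (1 - η) * (M0 - Ms) :=
    (cauchy_bound_ge_of_radius_le hD hκH (by linarith) hη0.le hη1.le hκfcd.2 (norm_nonneg g)
      hΔ.le (hκdum ▸ hΔg)).trans (mul_le_mul_of_nonneg_left hCauchy (by linarith))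
  have hpos : 0 < M0 - Ms :=
    pos_of_mul_pos_right ((by positivity : 0 < D / 2 * Δ ^ 2).trans_le hdec) (by linarith)
  have hmodel : |Fs - Ms| ≤ D / 2 * Δ ^ 2 :=
    hMs ▸ abs_sub_quadratic_model_le (hf.differentiable one_ne_zero) hLip hκLg.le hsΔ hg hB herr
  exact le_div_of_abs_sub_le_mul hM0 hpos (hmodel.trans hdec)

/-- **Success guarantee for small trust regions (zeroth/first-order, generic).**
If the trust-region radius satisfies `Δ ≤ κ_{dum} ‖g‖` with
`κ_{dum} = (1−η)κ_{fcd}/(κ_H + 2κ_{fde} + 2κ_{ge} + κ_{Lg})`, the balance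
condition and Cauchy decrease hold, then the success ratio
`ρ̂ = (F̄ˢ − F̄⁰)/(Mˢ − M⁰)` is at least `η`. -/
theorem stmt_11
    (d : ℕ) (f : EuclideanSpace ℝ (Fin d) → ℝ)
    (κLg : ℝ) (hκLg : 0 < κLg)
    (hf : ContDiff ℝ 1 f)
    (hLip : ∀ x₁ x₂ : EuclideanSpace ℝ (Fin d),
      ‖gradient f x₁ - gradient f x₂‖ ≤ κLg * ‖x₁ - x₂‖)
    (η κfcd κH κfde κge : ℝ)
    (hη : η ∈ Set.Ioo (0 : ℝ) 1) (hκfcd : κfcd ∈ Set.Ioc (0 : ℝ) 1)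
    (hκH : 0 < κH) (hκfde : 0 < κfde) (hκge : 0 < κge)
    (κdum : ℝ) (hκdum : κdum = (1 - η) * κfcd / (κH + 2 * κfde + 2 * κge + κLg))
    (Δ : ℝ) (x s : EuclideanSpace ℝ (Fin d)) (hs0 : 0 < ‖s‖) (hsΔ : ‖s‖ ≤ Δ)
    (g : EuclideanSpace ℝ (Fin d)) (hg : ‖g - gradient f x‖ ≤ κge * Δ)
    (B : EuclideanSpace ℝ (Fin d) →L[ℝ] EuclideanSpace ℝ (Fin d))
    (hBsymm : ∀ u v : EuclideanSpace ℝ (Fin d), (inner ℝ (B u) v : ℝ) = inner ℝ u (B v))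
    (hB : ‖B‖ ≤ κH)
    (F0 Fs : ℝ)
    (herr : |(F0 - f x) - (Fs - f (x + s))| ≤ κfde * Δ ^ 2)
    (M0 Ms : ℝ) (hM0 : M0 = F0)
    (hMs : Ms = F0 + (inner ℝ g s : ℝ) + (1 / 2 : ℝ) * (inner ℝ s (B s) : ℝ))
    (hCauchy : M0 - Ms ≥ κfcd / 2 * ‖g‖ * min (‖g‖ / κH) Δ)
    (hΔg : Δ ≤ κdum * ‖g‖) :
    η ≤ (Fs - F0) / (Ms - M0) :=
  stmt_11_general d f κLg hκLg hf hLip η κfcd κH κfde κge hη hκfcd hκH hκfde hκge κdum hκdum Δ x s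
    hs0 hsΔ g hg B hB F0 Fs herr M0 Ms hM0 hMs hCauchy hΔg
end

section
/- Let (Ω, F, P) be a probability space and d ≥ 1. For each integer k ≥ 2, let (V_{k,j})_{j≥1} be ℝ^d-valued random vectors and (F_{k,j})_{j≥0} an increasing sequence of sub-σ-algebras of F such that V_{k,j} is F_{k,j}-measurable and, for each coordinate r ∈ {1,…,d}, E[ [V_{k,j}]_r | F_{k,j−1} ] = 0 almost surely and E[ |[V_{k,j}]_r|^m | F_{k,j−1} ] ≤ (m!/2)·b^{m−2}·σ² almost surely for every integer m ≥ 2, with constants b > 0 and σ² > 0 not depending on k, j or r. Let ε_λ ∈ (0,1), λ₀ ≥ 2, ν > 0, set λ_k = λ₀·(log k)^{1+ε_λ}, and let N_k be positive-integer-valued random variables with N_k ≥ λ_k·ν almost surely for all k. Then for every κ > 0, P( ‖ (1/N_k)·Σ_{j=1}^{N_k} V_{k,j} ‖ > κ for infinitely many k ) = 0, where ‖·‖ is the Euclidean norm on ℝ^d. -/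
/-!
Fix an iteration `k` and a coordinate `r`. The partial sums `S_n = ∑_{j ≤ n} [V k j]_r` form a
martingale whose increments satisfy Bernstein's moment condition, so peeling off one increment at
a time with the conditional moment bounds gives `E[exp (t S_n)] ≤ (1 + t² σ²) ^ n` whenever
`t b ≤ 1/2`. Chernoff's bound for `± S_n` then yields `P(|S_n| ≥ n κ / d) ≤ 2 exp (-δ n)` with `δ`
independent of `k`, `r` and `n`. A union bound over the `d` coordinates and over all sample sizes
`n ≥ λ_k` bounds the probability that the sample-mean error exceeds `κ` at iteration `k` by
`C d exp (-δ λ_k)`. Since `λ_k` grows like `(log k) ^ (1 + ε_λ)`, this is eventually below `k⁻²`,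
and the first Borel–Cantelli lemma concludes.
-/

open MeasureTheory ProbabilityTheory Filter
open scoped ENNReal Nat

theorem Real.exp_sub_one_sub_eq_tsum_s16 (y : ℝ) :
    Real.exp y - 1 - y = ∑' i : ℕ, y ^ (i + 2) / (i + 2)! := by
  have h := (hasSum_nat_add_iff' 2).mpr (NormedSpace.expSeries_div_hasSum_exp y)
  rw [← Real.exp_eq_exp_ℝ] at h
  simpa [Finset.sum_range_succ, sub_sub] using h.tsum_eq.symm

theorem Real.exp_le_one_add_add_exp_abs_sub (y : ℝ) :
    Real.exp y ≤ 1 + y + (Real.exp |y| - 1 - |y|) := by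
  rcases le_or_gt 0 y with hy | hy
  · rw [abs_of_nonneg hy]; linarith
  · have := Real.sinh_lt_self_iff.mpr hy
    rw [abs_of_neg hy, Real.sinh_eq] at *
    linarith

theorem ENNReal.inv_one_sub_ofReal_le_two {r : ℝ} (hr : r ≤ 1 / 2) :
    (1 - ENNReal.ofReal r)⁻¹ ≤ 2 := by
  have h : ENNReal.ofReal r ≤ 2⁻¹ := by
    rw [← ENNReal.ofReal_ofNat 2, ← ENNReal.ofReal_inv_of_pos zero_lt_two]
    exact ENNReal.ofReal_le_ofReal (by linarith)
  rw [ENNReal.inv_le_iff_inv_le, ENNReal.le_sub_iff_add_le_right (by simp) (h.trans (by norm_num))]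
  calc 2⁻¹ + ENNReal.ofReal r ≤ 2⁻¹ + 2⁻¹ := by gcongr
    _ = 1 := ENNReal.inv_two_add_inv_two

theorem Real.summable_exp_neg_mul_log_rpow {a ε : ℝ} (ha : 0 < a) (hε : 0 < ε) :
    Summable fun k : ℕ => Real.exp (-(a * Real.log k ^ (1 + ε))) := by
  -- eventually `a (log k) ^ (1 + ε) ≥ 2 log k`, so the terms are eventually at most `k ^ (-2)`
  have hlog : Tendsto (fun k : ℕ => Real.log k ^ ε) atTop atTop :=
    (tendsto_rpow_atTop hε).comp (Real.tendsto_log_atTop.comp tendsto_natCast_atTop_atTop)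
  refine summable_of_isBigO_nat (Real.summable_nat_rpow_inv.2 one_lt_two) ?_
  refine Asymptotics.IsBigO.of_bound 1 ?_
  filter_upwards [hlog.eventually_ge_atTop (2 / a), eventually_ge_atTop 1] with k hk hk1
  have hk0 : (0 : ℝ) < k := by exact_mod_cast hk1
  have hlogk : 0 ≤ Real.log k := Real.log_nonneg (by exact_mod_cast hk1)
  rw [one_mul, Real.norm_of_nonneg (Real.exp_pos _).le, Real.norm_of_nonneg (by positivity),
    Real.rpow_def_of_pos hk0, ← Real.exp_neg, Real.exp_le_exp, neg_le_neg_iff,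
    Real.rpow_add' hlogk (by positivity), Real.rpow_one]
  have := mul_le_mul_of_nonneg_left hk ha.le
  rw [mul_div_cancel₀ _ ha.ne'] at this
  nlinarith

theorem EuclideanSpace.norm_le_sum_abs {ι : Type*} [Fintype ι] (v : EuclideanSpace ℝ ι) :
    ‖v‖ ≤ ∑ r, |v r| := by
  conv_lhs => rw [← (EuclideanSpace.basisFun ι ℝ).sum_repr v]
  refine (norm_sum_le _ _).trans (le_of_eq ?_)
  simp [norm_smul]

theorem EuclideanSpace.exists_lt_abs_apply_of_lt_norm_inv_smul {ι : Type*} [Fintype ι]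
    {v : EuclideanSpace ℝ ι} {n : ℕ} {κ : ℝ} (hκ : 0 ≤ κ) (h : κ < ‖(n : ℝ)⁻¹ • v‖) :
    ∃ r, n * (κ / Fintype.card ι) < |v r| := by
  by_contra! hv
  have hsum : ‖v‖ ≤ n * κ :=
    calc ‖v‖ ≤ ∑ r, |v r| := norm_le_sum_abs v
      _ ≤ Fintype.card ι * (n * (κ / Fintype.card ι)) := by
        simpa using Finset.sum_le_sum fun r (_ : r ∈ Finset.univ) => hv r
      _ ≤ n * κ := by
        rcases (Fintype.card ι).eq_zero_or_pos with h0 | h0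
        · simp [h0]; positivity
        · exact le_of_eq (by field_simp)
  rw [norm_smul, norm_inv, Real.norm_natCast] at h
  rcases n.eq_zero_or_pos with rfl | hn
  · simp at h; linarith
  · have : (n : ℝ)⁻¹ * ‖v‖ ≤ κ := by
      rw [inv_mul_le_iff₀ (by positivity)]; exact hsum
    linarith

section

variable {Ω : Type*} {m0 : MeasurableSpace Ω} {μ : Measure Ω}

theorem lintegral_mul_le_of_condExp_le [IsFiniteMeasure μ] {m : MeasurableSpace Ω} (hm : m ≤ m0)
    {f g : Ω → ℝ} {c : ℝ} (hf : StronglyMeasurable[m] f) (hf0 : 0 ≤ f) (hg0 : 0 ≤ g)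
    (hg : Integrable g μ) (hgc : μ[g|m] ≤ᵐ[μ] fun _ => c) :
    ∫⁻ ω, ENNReal.ofReal (f ω * g ω) ∂μ ≤ ENNReal.ofReal c * ∫⁻ ω, ENNReal.ofReal (f ω) ∂μ := by
  -- truncating `f` at level `M` makes `f * g` integrable, and monotone convergence removes it
  set fM : ℕ → Ω → ℝ := fun M ω => min (f ω) M
  have hfM : ∀ M, StronglyMeasurable[m] (fM M) := fun M => hf.inf stronglyMeasurable_const
  have hfM0 : ∀ M ω, 0 ≤ fM M ω := fun M ω => le_min (hf0 ω) M.cast_nonneg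
  have hfM_bdd : ∀ M ω, ‖fM M ω‖ ≤ M := fun M ω => by
    rw [Real.norm_of_nonneg (hfM0 M ω)]; exact min_le_right _ _
  have hfM_int : ∀ M, Integrable (fM M) μ := fun M =>
    (integrable_const (M : ℝ)).mono' ((hfM M).mono hm).aestronglyMeasurable
      (.of_forall (hfM_bdd M))
  have htrunc : ∀ M, ∫⁻ ω, ENNReal.ofReal (fM M ω * g ω) ∂μ
      ≤ ENNReal.ofReal c * ∫⁻ ω, ENNReal.ofReal (f ω) ∂μ := by
    intro M
    have hfMg : Integrable (fun ω => fM M ω * g ω) μ :=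
      hg.bdd_mul ((hfM M).mono hm).aestronglyMeasurable (.of_forall (hfM_bdd M))
    have hpull : ∫ ω, fM M ω * g ω ∂μ = ∫ ω, fM M ω * (μ[g|m]) ω ∂μ := by
      rw [← integral_condExp hm]
      exact integral_congr_ae (condExp_mul_of_stronglyMeasurable_left (hfM M) hfMg hg)
    have hle : ∫ ω, fM M ω * g ω ∂μ ≤ c * ∫ ω, fM M ω ∂μ := by
      rw [hpull, ← integral_const_mul]
      refine integral_mono_ae (integrable_condExp.bdd_mul ((hfM M).mono hm).aestronglyMeasurable
        (.of_forall (hfM_bdd M))) ((hfM_int M).const_mul c) ?_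
      filter_upwards [hgc] with ω hω
      rw [mul_comm c]
      exact mul_le_mul_of_nonneg_left hω (hfM0 M ω)
    rw [← ofReal_integral_eq_lintegral_ofReal hfMg
      (.of_forall fun ω => mul_nonneg (hfM0 M ω) (hg0 ω))]
    calc ENNReal.ofReal (∫ ω, fM M ω * g ω ∂μ)
        ≤ ENNReal.ofReal c * ENNReal.ofReal (∫ ω, fM M ω ∂μ) := by
          rw [← ENNReal.ofReal_mul' (integral_nonneg (hfM0 M))]
          exact ENNReal.ofReal_le_ofReal hle
      _ ≤ ENNReal.ofReal c * ∫⁻ ω, ENNReal.ofReal (f ω) ∂μ := by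
          rw [ofReal_integral_eq_lintegral_ofReal (hfM_int M) (.of_forall (hfM0 M))]
          gcongr with ω
          exact min_le_left _ _
  have hsup : ∀ ω, ENNReal.ofReal (f ω * g ω) = ⨆ M : ℕ, ENNReal.ofReal (fM M ω * g ω) := by
    intro ω
    refine le_antisymm ?_ (iSup_le fun M => ENNReal.ofReal_le_ofReal
      (mul_le_mul_of_nonneg_right (min_le_left _ _) (hg0 ω)))
    refine le_iSup_of_le ⌈f ω⌉₊ (le_of_eq ?_)
    simp only [fM, min_eq_left (Nat.le_ceil (f ω))]
  simp_rw [hsup]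
  rw [lintegral_iSup']
  · exact iSup_le htrunc
  · exact fun M => (((hfM M).mono hm).aestronglyMeasurable.aemeasurable.mul
      hg.aestronglyMeasurable.aemeasurable).ennreal_ofReal
  · exact .of_forall fun ω M M' hMM' => ENNReal.ofReal_le_ofReal <|
      mul_le_mul_of_nonneg_right (min_le_min le_rfl (Nat.cast_le.mpr hMM')) (hg0 ω)

theorem measure_iUnion_ge_le_of_le_exp {A : ℕ → Set Ω} {C δ : ℝ} (hC : 0 ≤ C) (hδ : 0 < δ)
    (hA : ∀ n : ℕ, μ (A n) ≤ ENNReal.ofReal (C * Real.exp (-(δ * n)))) (x : ℝ) :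
    μ (⋃ (n : ℕ) (_ : x ≤ n), A n)
      ≤ ENNReal.ofReal (C / (1 - Real.exp (-δ)) * Real.exp (-(δ * x))) := by
  set ρ := Real.exp (-δ)
  have hρ1 : ρ < 1 := Real.exp_lt_one_iff.2 (by linarith)
  set k := ⌈x⌉₊
  have hsub : (⋃ (n : ℕ) (_ : x ≤ n), A n) ⊆ ⋃ i, A (k + i) := by
    simp only [Set.iUnion_subset_iff]
    intro n hn
    obtain ⟨i, rfl⟩ := Nat.exists_eq_add_of_le (Nat.ceil_le.2 hn)
    exact Set.subset_iUnion (fun i => A (k + i)) i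
  have hterm : ∀ i : ℕ, C * Real.exp (-(δ * ↑(k + i))) = C * Real.exp (-(δ * k)) * ρ ^ i := by
    intro i
    rw [← Real.exp_nat_mul, mul_assoc, ← Real.exp_add]
    push_cast
    ring_nf
  have hgeom : Summable fun i : ℕ => C * Real.exp (-(δ * k)) * ρ ^ i :=
    (summable_geometric_of_lt_one (Real.exp_pos _).le hρ1).mul_left _
  calc μ (⋃ (n : ℕ) (_ : x ≤ n), A n)
      ≤ ∑' i, μ (A (k + i)) := (measure_mono hsub).trans (measure_iUnion_le _)
    _ ≤ ∑' i : ℕ, ENNReal.ofReal (C * Real.exp (-(δ * k)) * ρ ^ i) :=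
        ENNReal.tsum_le_tsum fun i => (hA (k + i)).trans_eq (by rw [hterm])
    _ = ENNReal.ofReal (C * Real.exp (-(δ * k)) * (1 - ρ)⁻¹) := by
        rw [← ENNReal.ofReal_tsum_of_nonneg (fun i => by positivity) hgeom, tsum_mul_left,
          tsum_geometric_of_lt_one (Real.exp_pos _).le hρ1]
    _ ≤ ENNReal.ofReal (C / (1 - ρ) * Real.exp (-(δ * x))) := by
        refine ENNReal.ofReal_le_ofReal ?_
        have : 0 ≤ C * (1 - ρ)⁻¹ := mul_nonneg hC (inv_nonneg.2 (by linarith))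
        calc C * Real.exp (-(δ * k)) * (1 - ρ)⁻¹ = C * (1 - ρ)⁻¹ * Real.exp (-(δ * k)) := by ring
          _ ≤ C / (1 - ρ) * Real.exp (-(δ * x)) := by
            rw [← div_eq_mul_inv]
            gcongr
            exact Nat.le_ceil x

theorem measure_setOfPred_frequently_eq_zero_of_eventually_le [IsFiniteMeasure μ] {p : ℕ → Ω → Prop}
    {g : ℕ → ℝ} (hg : Summable g) (h : ∀ᶠ k in atTop, μ {ω | p k ω} ≤ ENNReal.ofReal (g k)) :
    μ {ω | ∃ᶠ k in atTop, p k ω} = 0 := by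
  obtain ⟨K, hK⟩ := eventually_atTop.1 h
  refine measure_setOfPred_frequently_eq_zero ?_
  rw [← ENNReal.summable.sum_add_tsum_nat_add' (k := K)]
  refine ENNReal.add_ne_top.2 ⟨ENNReal.sum_ne_top.2 fun k _ => measure_ne_top μ _, ?_⟩
  refine ne_top_of_le_ne_top ?_ (ENNReal.tsum_le_tsum fun k => hK (k + K) (by omega))
  exact ((summable_nat_add_iff K).2 hg).tsum_ofReal_ne_top

structure IsBernsteinIncrement (μ : Measure Ω) (m : MeasurableSpace Ω) (X : Ω → ℝ) (b Q : ℝ) :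
    Prop where
  integrable : Integrable X μ
  integrable_abs_pow : ∀ k, 2 ≤ k → Integrable (fun ω => |X ω| ^ k) μ
  condExp_ae_eq_zero : μ[X|m] =ᵐ[μ] 0
  condExp_abs_pow_le : ∀ k, 2 ≤ k →
    ∀ᵐ ω ∂μ, μ[fun ω' => |X ω'| ^ k|m] ω ≤ (k ! : ℝ) / 2 * b ^ (k - 2) * Q

namespace IsBernsteinIncrement

variable {m : MeasurableSpace Ω} {X f : Ω → ℝ} {b Q : ℝ}

theorem neg (hX : IsBernsteinIncrement μ m X b Q) :
    IsBernsteinIncrement μ m (-X) b Q where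
  integrable := hX.integrable.neg
  integrable_abs_pow k hk := by simpa only [Pi.neg_apply, abs_neg] using hX.integrable_abs_pow k hk
  condExp_ae_eq_zero := by
    filter_upwards [condExp_neg X m (μ := μ), hX.condExp_ae_eq_zero] with ω h h0
    simp_all
  condExp_abs_pow_le k hk := by
    simpa only [Pi.neg_apply, abs_neg] using hX.condExp_abs_pow_le k hk

variable [IsFiniteMeasure μ] (hX : IsBernsteinIncrement μ m X b Q) (hm : m ≤ m0)
  (hf : StronglyMeasurable[m] f) (hf0 : 0 ≤ f)

include hX hm hf hf0

theorem lintegral_mul_abs_pow_le {k : ℕ} (hk : 2 ≤ k) :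
    ∫⁻ ω, ENNReal.ofReal (f ω * |X ω| ^ k) ∂μ
      ≤ ENNReal.ofReal ((k ! : ℝ) / 2 * b ^ (k - 2) * Q) * ∫⁻ ω, ENNReal.ofReal (f ω) ∂μ :=
  lintegral_mul_le_of_condExp_le hm hf hf0 (fun ω => by positivity) (hX.integrable_abs_pow k hk)
    (hX.condExp_abs_pow_le k hk)

theorem integrable_mul_abs_pow (hfi : Integrable f μ) {k : ℕ} (hk : 2 ≤ k) :
    Integrable (fun ω => f ω * |X ω| ^ k) μ := by
  have h0 : 0 ≤ᵐ[μ] fun ω => f ω * |X ω| ^ k :=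
    .of_forall fun ω => mul_nonneg (hf0 ω) (by positivity)
  refine ⟨(hf.mono hm).aestronglyMeasurable.mul (hX.integrable_abs_pow k hk).1,
    (hasFiniteIntegral_iff_ofReal h0).2 ((hX.lintegral_mul_abs_pow_le hm hf hf0 hk).trans_lt ?_)⟩
  rw [← ofReal_integral_eq_lintegral_ofReal hfi (.of_forall hf0)]
  exact ENNReal.mul_lt_top ENNReal.ofReal_lt_top ENNReal.ofReal_lt_top

theorem integrable_mul (hfi : Integrable f μ) : Integrable (fun ω => f ω * X ω) μ := by
  refine (hfi.add (hX.integrable_mul_abs_pow hm hf hf0 hfi le_rfl)).mono'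
    ((hf.mono hm).aestronglyMeasurable.mul hX.integrable.1) (.of_forall fun ω => ?_)
  rw [norm_mul, Real.norm_of_nonneg (hf0 ω), Real.norm_eq_abs, Pi.add_apply, ← mul_one_add]
  exact mul_le_mul_of_nonneg_left (by nlinarith [sq_nonneg (|X ω| - 1)]) (hf0 ω)

theorem integral_mul_eq_zero (hfi : Integrable f μ) : ∫ ω, f ω * X ω ∂μ = 0 := by
  have hzero : μ[fun ω => f ω * X ω|m] =ᵐ[μ] 0 := by
    filter_upwards [condExp_mul_of_stronglyMeasurable_left hf (hX.integrable_mul hm hf hf0 hfi)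
      hX.integrable, hX.condExp_ae_eq_zero] with ω h h0
    simp_all [Pi.mul_def]
  rw [← integral_condExp hm]
  simp [integral_congr_ae hzero]

theorem lintegral_mul_exp_abs_sub_le (hb : 0 ≤ b) {t : ℝ} (ht : 0 ≤ t) (htb : t * b ≤ 1 / 2) :
    ∫⁻ ω, ENNReal.ofReal (f ω * (Real.exp (t * |X ω|) - 1 - t * |X ω|)) ∂μ
      ≤ ENNReal.ofReal (t ^ 2 * Q) * ∫⁻ ω, ENNReal.ofReal (f ω) ∂μ := by
  set c : ℕ → ℝ := fun i => t ^ (i + 2) / (i + 2)!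
  have hc : ∀ i, 0 ≤ c i := fun i => by positivity
  have hseries : ∀ ω, ENNReal.ofReal (f ω * (Real.exp (t * |X ω|) - 1 - t * |X ω|))
      = ∑' i, ENNReal.ofReal (c i) * ENNReal.ofReal (f ω * |X ω| ^ (i + 2)) := by
    intro ω
    have hsum := ((summable_nat_add_iff 2).2
      (Real.summable_pow_div_factorial (t * |X ω|))).mul_left (f ω)
    rw [Real.exp_sub_one_sub_eq_tsum_s16, ← tsum_mul_left,
      ENNReal.ofReal_tsum_of_nonneg (fun i => mul_nonneg (hf0 ω) (by positivity)) hsum]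
    refine tsum_congr fun i => ?_
    rw [← ENNReal.ofReal_mul (hc i)]
    congr 1
    simp only [c, mul_pow]
    ring
  have hmeas : ∀ i, AEMeasurable (fun ω => ENNReal.ofReal (f ω * |X ω| ^ (i + 2))) μ := fun i =>
    ((hf.mono hm).aestronglyMeasurable.aemeasurable.mul
      (hX.integrable_abs_pow (i + 2) (by omega)).1.aemeasurable).ennreal_ofReal
  have hterm : ∀ i, ENNReal.ofReal (c i) * ENNReal.ofReal (((i + 2)! : ℝ) / 2 * b ^ (i + 2 - 2) * Q)
      = ENNReal.ofReal (t ^ 2 * Q / 2) * ENNReal.ofReal (t * b) ^ i := by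
    intro i
    rw [← ENNReal.ofReal_mul (hc i), ← ENNReal.ofReal_pow (mul_nonneg ht hb),
      ← ENNReal.ofReal_mul' (pow_nonneg (mul_nonneg ht hb) i), Nat.add_sub_cancel]
    congr 1
    simp only [c]
    field_simp
    ring
  simp_rw [hseries]
  rw [lintegral_tsum fun i => (hmeas i).const_mul _]
  calc ∑' i, ∫⁻ ω, ENNReal.ofReal (c i) * ENNReal.ofReal (f ω * |X ω| ^ (i + 2)) ∂μ
      = ∑' i, ENNReal.ofReal (c i) * ∫⁻ ω, ENNReal.ofReal (f ω * |X ω| ^ (i + 2)) ∂μ := by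
        simp_rw [lintegral_const_mul' _ _ ENNReal.ofReal_ne_top]
    _ ≤ ∑' i, ENNReal.ofReal (c i) * (ENNReal.ofReal (((i + 2)! : ℝ) / 2 * b ^ (i + 2 - 2) * Q)
          * ∫⁻ ω, ENNReal.ofReal (f ω) ∂μ) := by
        gcongr with i
        exact hX.lintegral_mul_abs_pow_le hm hf hf0 (by omega)
    _ = ENNReal.ofReal (t ^ 2 * Q / 2) * (1 - ENNReal.ofReal (t * b))⁻¹
          * ∫⁻ ω, ENNReal.ofReal (f ω) ∂μ := by
        simp_rw [← mul_assoc, hterm, ENNReal.tsum_mul_right, ENNReal.tsum_mul_left,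
          ENNReal.tsum_geometric]
    _ ≤ ENNReal.ofReal (t ^ 2 * Q / 2) * 2 * ∫⁻ ω, ENNReal.ofReal (f ω) ∂μ := by
        gcongr
        exact ENNReal.inv_one_sub_ofReal_le_two htb
    _ = ENNReal.ofReal (t ^ 2 * Q) * ∫⁻ ω, ENNReal.ofReal (f ω) ∂μ := by
        rw [← ENNReal.ofReal_ofNat 2, ← ENNReal.ofReal_mul' zero_le_two]
        norm_num

theorem integrable_mul_exp_abs_sub_and_integral_le (hfi : Integrable f μ) (hb : 0 ≤ b)
    (hQ : 0 ≤ Q) {t : ℝ} (ht : 0 ≤ t) (htb : t * b ≤ 1 / 2) :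
    Integrable (fun ω => f ω * (Real.exp (t * |X ω|) - 1 - t * |X ω|)) μ ∧
      ∫ ω, f ω * (Real.exp (t * |X ω|) - 1 - t * |X ω|) ∂μ ≤ t ^ 2 * Q * ∫ ω, f ω ∂μ := by
  have h0 : 0 ≤ᵐ[μ] fun ω => f ω * (Real.exp (t * |X ω|) - 1 - t * |X ω|) := .of_forall fun ω =>
    mul_nonneg (hf0 ω) (by linarith [Real.add_one_le_exp (t * |X ω|)])
  have hmeas : AEStronglyMeasurable[m0]
      (fun ω => f ω * (Real.exp (t * |X ω|) - 1 - t * |X ω|)) μ :=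
    hfi.1.mul <| (by fun_prop : Continuous fun x => Real.exp (t * |x|) - 1 - t * |x|)
      |>.comp_aestronglyMeasurable hX.integrable.1
  have hlint : ∫⁻ ω, ENNReal.ofReal (f ω * (Real.exp (t * |X ω|) - 1 - t * |X ω|)) ∂μ
      ≤ ENNReal.ofReal (t ^ 2 * Q * ∫ ω, f ω ∂μ) := by
    rw [ENNReal.ofReal_mul (by positivity),
      ofReal_integral_eq_lintegral_ofReal hfi (.of_forall hf0)]
    exact hX.lintegral_mul_exp_abs_sub_le hm hf hf0 hb ht htb
  refine ⟨⟨hmeas, (hasFiniteIntegral_iff_ofReal h0).2 (hlint.trans_lt ENNReal.ofReal_lt_top)⟩, ?_⟩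
  rw [integral_eq_lintegral_of_nonneg_ae h0 hmeas]
  exact ENNReal.toReal_le_of_le_ofReal (mul_nonneg (by positivity) (integral_nonneg hf0)) hlint

theorem integral_mul_exp_le (hfi : Integrable f μ) (hb : 0 ≤ b) (hQ : 0 ≤ Q) {t : ℝ}
    (ht : 0 ≤ t) (htb : t * b ≤ 1 / 2) :
    Integrable (fun ω => f ω * Real.exp (t * X ω)) μ ∧
      ∫ ω, f ω * Real.exp (t * X ω) ∂μ ≤ (1 + t ^ 2 * Q) * ∫ ω, f ω ∂μ := by
  set R : Ω → ℝ := fun ω => Real.exp (t * |X ω|) - 1 - t * |X ω|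
  obtain ⟨hfR, hfR_le⟩ :=
    hX.integrable_mul_exp_abs_sub_and_integral_le hm hf hf0 hfi hb hQ ht htb
  have hfX := hX.integrable_mul hm hf hf0 hfi
  have hlin : Integrable (fun ω => f ω + t * (f ω * X ω)) μ := hfi.add (hfX.const_mul t)
  have hdom : Integrable (fun ω => f ω + t * (f ω * X ω) + f ω * R ω) μ := hlin.add hfR
  have hpt : ∀ ω, f ω * Real.exp (t * X ω) ≤ f ω + t * (f ω * X ω) + f ω * R ω := by
    intro ω
    have h := Real.exp_le_one_add_add_exp_abs_sub (t * X ω)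
    rw [abs_mul, abs_of_nonneg ht] at h
    have := mul_le_mul_of_nonneg_left h (hf0 ω)
    simp only [R]
    linarith
  have hE : Integrable (fun ω => f ω * Real.exp (t * X ω)) μ :=
    hdom.mono' (hfi.1.mul ((by fun_prop : Continuous fun x => Real.exp (t * x))
      |>.comp_aestronglyMeasurable hX.integrable.1)) (.of_forall fun ω => by
        rw [Real.norm_of_nonneg (mul_nonneg (hf0 ω) (Real.exp_nonneg _))]
        exact hpt ω)
  refine ⟨hE, ?_⟩
  calc ∫ ω, f ω * Real.exp (t * X ω) ∂μ
      ≤ ∫ ω, f ω + t * (f ω * X ω) + f ω * R ω ∂μ := integral_mono hE hdom hpt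
    _ = ∫ ω, f ω ∂μ + t * ∫ ω, f ω * X ω ∂μ + ∫ ω, f ω * R ω ∂μ := by
        rw [integral_add hlin hfR, integral_add hfi (hfX.const_mul t), integral_const_mul]
    _ ≤ (1 + t ^ 2 * Q) * ∫ ω, f ω ∂μ := by
        rw [hX.integral_mul_eq_zero hm hf hf0 hfi]
        linarith

end IsBernsteinIncrement

/-- Chernoff exponent for the choice `t = min (1 / (2 b)) (κ / (2 Q))`, which makes `t b ≤ 1 / 2`
and `t ^ 2 Q ≤ t κ / 2`. -/
noncomputable def bernsteinRate (b Q κ : ℝ) : ℝ := min (1 / (2 * b)) (κ / (2 * Q)) * κ / 2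

theorem bernsteinRate_pos {b Q κ : ℝ} (hb : 0 < b) (hQ : 0 < Q) (hκ : 0 < κ) :
    0 < bernsteinRate b Q κ := by
  unfold bernsteinRate
  positivity

section Chernoff

variable [IsProbabilityMeasure μ] {ℱ : Filtration ℕ m0} {X : ℕ → Ω → ℝ} {b Q : ℝ}
  (hadapt : ∀ j, StronglyMeasurable[ℱ (j + 1)] (X (j + 1)))
  (hX : ∀ j, IsBernsteinIncrement μ (ℱ j) (X (j + 1)) b Q)

include hadapt hX

theorem integrable_exp_mul_sum_and_mgf_le (hb : 0 ≤ b) (hQ : 0 ≤ Q) {t : ℝ} (ht : 0 ≤ t)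
    (htb : t * b ≤ 1 / 2) (n : ℕ) :
    Integrable (fun ω => Real.exp (t * ∑ j ∈ Finset.Icc 1 n, X j ω)) μ ∧
      mgf (fun ω => ∑ j ∈ Finset.Icc 1 n, X j ω) μ t ≤ (1 + t ^ 2 * Q) ^ n := by
  induction n with
  | zero => simp
  | succ n ih =>
    have hS : StronglyMeasurable[ℱ n] (fun ω => Real.exp (t * ∑ j ∈ Finset.Icc 1 n, X j ω)) := by
      refine (by fun_prop : Continuous fun x => Real.exp (t * x)).comp_stronglyMeasurable
        (Finset.stronglyMeasurable_fun_sum _ fun j hj => ?_)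
      obtain ⟨i, rfl⟩ := Nat.exists_eq_add_of_le' (Finset.mem_Icc.1 hj).1
      exact (hadapt i).mono (ℱ.mono (Finset.mem_Icc.1 hj).2)
    have hsplit : (fun ω => Real.exp (t * ∑ j ∈ Finset.Icc 1 (n + 1), X j ω))
        = fun ω => Real.exp (t * ∑ j ∈ Finset.Icc 1 n, X j ω) * Real.exp (t * X (n + 1) ω) := by
      ext ω
      rw [Finset.sum_Icc_succ_top (by omega), mul_add, Real.exp_add]
    obtain ⟨hint, hle⟩ := (hX n).integral_mul_exp_le (ℱ.le n) hS (fun ω => (Real.exp_pos _).le)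
      ih.1 hb hQ ht htb
    refine ⟨hsplit ▸ hint, ?_⟩
    rw [mgf, hsplit, pow_succ']
    exact hle.trans (mul_le_mul_of_nonneg_left ih.2 (by positivity))

theorem measure_sum_ge_le_exp (hb : 0 ≤ b) (hQ : 0 ≤ Q) {t : ℝ} (ht : 0 ≤ t)
    (htb : t * b ≤ 1 / 2) (a : ℝ) (n : ℕ) :
    μ {ω | a ≤ ∑ j ∈ Finset.Icc 1 n, X j ω}
      ≤ ENNReal.ofReal (Real.exp (-t * a + n * (t ^ 2 * Q))) := by
  obtain ⟨hint, hmgf⟩ := integrable_exp_mul_sum_and_mgf_le hadapt hX hb hQ ht htb n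
  rw [← ENNReal.ofReal_toReal (measure_ne_top μ _)]
  refine ENNReal.ofReal_le_ofReal ((measure_ge_le_exp_mul_mgf a ht hint).trans ?_)
  rw [Real.exp_add, Real.exp_nat_mul]
  gcongr
  exact hmgf.trans <|
    pow_le_pow_left₀ (by positivity) (by linarith [Real.add_one_le_exp (t ^ 2 * Q)]) n

theorem measure_abs_sum_ge_le_two_mul_exp (hb : 0 < b) (hQ : 0 < Q) {κ : ℝ} (hκ : 0 < κ) (n : ℕ) :
    μ {ω | n * κ ≤ |∑ j ∈ Finset.Icc 1 n, X j ω|}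
      ≤ ENNReal.ofReal (2 * Real.exp (-(bernsteinRate b Q κ * n))) := by
  set t := min (1 / (2 * b)) (κ / (2 * Q))
  have ht : 0 < t := lt_min (by positivity) (by positivity)
  have htb : t * b ≤ 1 / 2 := by
    calc t * b ≤ 1 / (2 * b) * b := by gcongr; exact min_le_left _ _
      _ = 1 / 2 := by field_simp
  have hexp : -t * (n * κ) + n * (t ^ 2 * Q) ≤ -(bernsteinRate b Q κ * n) := by
    have htQ : t * Q ≤ κ / 2 := by
      calc t * Q ≤ κ / (2 * Q) * Q := by gcongr; exact min_le_right _ _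
        _ = κ / 2 := by field_simp
    have : t * (t * Q) * n ≤ t * (κ / 2) * n := by gcongr
    simp only [bernsteinRate, t] at this ⊢
    nlinarith
  have hsub : {ω | n * κ ≤ |∑ j ∈ Finset.Icc 1 n, X j ω|}
      ⊆ {ω | n * κ ≤ ∑ j ∈ Finset.Icc 1 n, X j ω}
        ∪ {ω | n * κ ≤ ∑ j ∈ Finset.Icc 1 n, (-X j) ω} := fun ω hω => by
    rcases le_abs.1 (Set.mem_ofPred.1 hω) with h | h
    exacts [Or.inl h, Or.inr (by simpa [Finset.sum_neg_distrib] using h)]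
  have hbound : ∀ Y : ℕ → Ω → ℝ, (∀ j, StronglyMeasurable[ℱ (j + 1)] (Y (j + 1))) →
      (∀ j, IsBernsteinIncrement μ (ℱ j) (Y (j + 1)) b Q) →
      μ {ω | n * κ ≤ ∑ j ∈ Finset.Icc 1 n, Y j ω}
        ≤ ENNReal.ofReal (Real.exp (-(bernsteinRate b Q κ * n))) := fun Y hY hYB =>
    (measure_sum_ge_le_exp hY hYB hb.le hQ.le ht.le htb _ n).trans
      (ENNReal.ofReal_le_ofReal (Real.exp_le_exp.2 hexp))
  calc μ {ω | n * κ ≤ |∑ j ∈ Finset.Icc 1 n, X j ω|}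
      ≤ μ {ω | n * κ ≤ ∑ j ∈ Finset.Icc 1 n, X j ω}
        + μ {ω | n * κ ≤ ∑ j ∈ Finset.Icc 1 n, (-X j) ω} :=
          (measure_mono hsub).trans (measure_union_le _ _)
    _ ≤ ENNReal.ofReal (Real.exp (-(bernsteinRate b Q κ * n)))
        + ENNReal.ofReal (Real.exp (-(bernsteinRate b Q κ * n))) :=
        add_le_add (hbound X hadapt hX)
          (hbound (fun j => -X j) (fun j => (hadapt j).neg) fun j => (hX j).neg)
    _ = ENNReal.ofReal (2 * Real.exp (-(bernsteinRate b Q κ * n))) := by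
        rw [← ENNReal.ofReal_add (by positivity) (by positivity), two_mul]

end Chernoff

theorem measure_lt_norm_inv_smul_sum_le [IsProbabilityMeasure μ] {ℱ : Filtration ℕ m0}
    {ι : Type*} [Fintype ι] [Nonempty ι] {V : ℕ → Ω → EuclideanSpace ℝ ι} {b Q : ℝ}
    (hb : 0 < b) (hQ : 0 < Q)
    (hadapt : ∀ j, StronglyMeasurable[ℱ (j + 1)] (V (j + 1)))
    (hV : ∀ j r, IsBernsteinIncrement μ (ℱ j) (fun ω => V (j + 1) ω r) b Q)
    {N : Ω → ℕ} {x : ℝ} (hN : ∀ᵐ ω ∂μ, x ≤ N ω) {κ : ℝ} (hκ : 0 < κ) :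
    μ {ω | κ < ‖(N ω : ℝ)⁻¹ • ∑ j ∈ Finset.Icc 1 (N ω), V j ω‖}
      ≤ ENNReal.ofReal (Fintype.card ι
        * (2 / (1 - Real.exp (-bernsteinRate b Q (κ / Fintype.card ι)))
          * Real.exp (-(bernsteinRate b Q (κ / Fintype.card ι) * x)))) := by
  set δ := bernsteinRate b Q (κ / Fintype.card ι)
  have hκι : 0 < κ / Fintype.card ι := div_pos hκ (Nat.cast_pos.2 Fintype.card_pos)
  set T : ι → ℕ → Set Ω := fun r n =>
    {ω | n * (κ / Fintype.card ι) ≤ |∑ j ∈ Finset.Icc 1 n, V j ω r|}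
  have htail : ∀ r, μ (⋃ (n : ℕ) (_ : x ≤ n), T r n)
      ≤ ENNReal.ofReal (2 / (1 - Real.exp (-δ)) * Real.exp (-(δ * x))) := fun r =>
    measure_iUnion_ge_le_of_le_exp zero_le_two (bernsteinRate_pos hb hQ hκι)
      (measure_abs_sum_ge_le_two_mul_exp (X := fun j ω => V j ω r)
        (fun j => (EuclideanSpace.proj r).continuous.comp_stronglyMeasurable (hadapt j))
        (fun j => hV j r) hb hQ hκι) x
  have hsub : {ω | κ < ‖(N ω : ℝ)⁻¹ • ∑ j ∈ Finset.Icc 1 (N ω), V j ω‖}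
      ≤ᵐ[μ] ⋃ (r : ι) (n : ℕ) (_ : x ≤ n), T r n := by
    filter_upwards [hN] with ω hNω (hω : κ < _)
    obtain ⟨r, hr⟩ := EuclideanSpace.exists_lt_abs_apply_of_lt_norm_inv_smul hκ.le hω
    change ω ∈ ⋃ (r : ι) (n : ℕ) (_ : x ≤ n), T r n
    simp only [Set.mem_iUnion]
    exact ⟨r, N ω, hNω, by simpa [T] using hr.le⟩
  calc μ {ω | κ < ‖(N ω : ℝ)⁻¹ • ∑ j ∈ Finset.Icc 1 (N ω), V j ω‖}
      ≤ ∑ r, μ (⋃ (n : ℕ) (_ : x ≤ n), T r n) :=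
        (measure_mono_ae hsub).trans (measure_iUnion_fintype_le _ _)
    _ ≤ ∑ _r : ι, ENNReal.ofReal (2 / (1 - Real.exp (-δ)) * Real.exp (-(δ * x))) :=
        Finset.sum_le_sum fun r _ => htail r
    _ = _ := by
        rw [Finset.sum_const, Finset.card_univ, nsmul_eq_mul,
          ENNReal.ofReal_mul (Nat.cast_nonneg _), ENNReal.ofReal_natCast]

end

theorem stmt_16_general
    {Ω : Type*} {m0 : MeasurableSpace Ω} (P : Measure Ω) [IsProbabilityMeasure P]
    (d : ℕ) (hd : 1 ≤ d)
    (V : ℕ → ℕ → Ω → EuclideanSpace ℝ (Fin d))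
    (𝓕 : ℕ → ℕ → MeasurableSpace Ω)
    (hFle : ∀ k j, 𝓕 k j ≤ m0) (hFmono : ∀ k, Monotone (𝓕 k))
    (b σ : ℝ) (hb : 0 < b) (hσ : 0 < σ ^ 2)
    (hadapted : ∀ k, 2 ≤ k → ∀ j, 1 ≤ j → StronglyMeasurable[𝓕 k j] (V k j))
    (hint : ∀ k, 2 ≤ k → ∀ j, 1 ≤ j → ∀ r : Fin d,
      Integrable (fun ω => V k j ω r) P)
    (hmean : ∀ k, 2 ≤ k → ∀ j, 1 ≤ j → ∀ r : Fin d,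
      P[fun ω => V k j ω r | 𝓕 k (j - 1)] =ᵐ[P] 0)
    (hintm : ∀ k, 2 ≤ k → ∀ j, 1 ≤ j → ∀ r : Fin d, ∀ m : ℕ, 2 ≤ m →
      Integrable (fun ω => |V k j ω r| ^ m) P)
    (hmom : ∀ k, 2 ≤ k → ∀ j, 1 ≤ j → ∀ r : Fin d, ∀ m : ℕ, 2 ≤ m →
      ∀ᵐ ω ∂P, (P[fun ω' => |V k j ω' r| ^ m | 𝓕 k (j - 1)]) ω
        ≤ (m.factorial : ℝ) / 2 * b ^ (m - 2) * σ ^ 2)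
    (εlam lam0 ν : ℝ) (hεlam : εlam ∈ Set.Ioo (0 : ℝ) 1) (hlam0 : 2 ≤ lam0)
    (hν : 0 < ν)
    (N : ℕ → Ω → ℕ)
    (hN : ∀ k : ℕ, 2 ≤ k →
      ∀ᵐ ω ∂P, lam0 * Real.log (k : ℝ) ^ ((1 : ℝ) + εlam) * ν ≤ (N k ω : ℝ)) :
    ∀ κ : ℝ, 0 < κ →
      P {ω | ∃ᶠ k in atTop,
        κ < ‖((N k ω : ℝ))⁻¹ • ∑ j ∈ Finset.Icc 1 (N k ω), V k j ω‖} = 0 := by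
  intro κ hκ
  have : Nonempty (Fin d) := ⟨⟨0, hd⟩⟩
  set δ := bernsteinRate b (σ ^ 2) (κ / Fintype.card (Fin d))
  have hδ : 0 < δ := bernsteinRate_pos hb hσ (div_pos hκ (Nat.cast_pos.2 Fintype.card_pos))
  refine measure_setOfPred_frequently_eq_zero_of_eventually_le (g := fun k =>
    Fintype.card (Fin d) * (2 / (1 - Real.exp (-δ))
      * Real.exp (-(δ * (lam0 * Real.log k ^ ((1 : ℝ) + εlam) * ν))))) ?_ ?_
  · exact ((Real.summable_exp_neg_mul_log_rpow (a := δ * lam0 * ν) (by positivity)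
      hεlam.1).mul_left (Fintype.card (Fin d) * (2 / (1 - Real.exp (-δ))))).congr
      fun k => by ring_nf
  filter_upwards [eventually_ge_atTop 2] with k hk
  exact measure_lt_norm_inv_smul_sum_le (ℱ := ⟨𝓕 k, hFmono k, hFle k⟩) hb hσ
    (fun j => hadapted k hk (j + 1) (by omega))
    (fun j r =>
      { integrable := hint k hk (j + 1) (by omega) r
        integrable_abs_pow := hintm k hk (j + 1) (by omega) r
        condExp_ae_eq_zero := by simpa using hmean k hk (j + 1) (by omega) r
        condExp_abs_pow_le := by simpa using hmom k hk (j + 1) (by omega) r })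
    (hN k hk) hκ

/-- **Almost-sure control of adaptively sampled gradient estimation errors.**
If within each iteration `k ≥ 2` the `ℝ^d`-valued gradient observation errors
`(V k j)_j` form a martingale difference array whose coordinates satisfy the
conditional Bernstein moment condition with uniform parameters `(b, σ²)`, and
the adaptive sample size `N k` satisfies `N k ≥ λ_k ν` with
`λ_k = λ₀ (log k)^{1+ε_λ}`, then for every `κ > 0`, almost surely the norm of
the sample-mean error exceeds `κ` only finitely often. -/
theorem stmt_16
    {Ω : Type*} {m0 : MeasurableSpace Ω} (P : Measure Ω) [IsProbabilityMeasure P]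
    (d : ℕ) (hd : 1 ≤ d)
    (V : ℕ → ℕ → Ω → EuclideanSpace ℝ (Fin d))
    (𝓕 : ℕ → ℕ → MeasurableSpace Ω)
    (hFle : ∀ k j, 𝓕 k j ≤ m0) (hFmono : ∀ k, Monotone (𝓕 k))
    (b σ : ℝ) (hb : 0 < b) (hσ : 0 < σ ^ 2)
    (hadapted : ∀ k, 2 ≤ k → ∀ j, 1 ≤ j → StronglyMeasurable[𝓕 k j] (V k j))
    (hint : ∀ k, 2 ≤ k → ∀ j, 1 ≤ j → ∀ r : Fin d,
      Integrable (fun ω => V k j ω r) P)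
    (hmean : ∀ k, 2 ≤ k → ∀ j, 1 ≤ j → ∀ r : Fin d,
      P[fun ω => V k j ω r | 𝓕 k (j - 1)] =ᵐ[P] 0)
    (hintm : ∀ k, 2 ≤ k → ∀ j, 1 ≤ j → ∀ r : Fin d, ∀ m : ℕ, 2 ≤ m →
      Integrable (fun ω => |V k j ω r| ^ m) P)
    (hmom : ∀ k, 2 ≤ k → ∀ j, 1 ≤ j → ∀ r : Fin d, ∀ m : ℕ, 2 ≤ m →
      ∀ᵐ ω ∂P, (P[fun ω' => |V k j ω' r| ^ m | 𝓕 k (j - 1)]) ω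
        ≤ (m.factorial : ℝ) / 2 * b ^ (m - 2) * σ ^ 2)
    (εlam lam0 ν : ℝ) (hεlam : εlam ∈ Set.Ioo (0 : ℝ) 1) (hlam0 : 2 ≤ lam0)
    (hν : 0 < ν)
    (N : ℕ → Ω → ℕ) (hNmeas : ∀ k, Measurable (N k))
    (hNpos : ∀ k, ∀ᵐ ω ∂P, 1 ≤ N k ω)
    (hN : ∀ k : ℕ, 2 ≤ k →
      ∀ᵐ ω ∂P, lam0 * Real.log (k : ℝ) ^ ((1 : ℝ) + εlam) * ν ≤ (N k ω : ℝ)) :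
    ∀ κ : ℝ, 0 < κ →
      P {ω | ∃ᶠ k in atTop,
        κ < ‖((N k ω : ℝ))⁻¹ • ∑ j ∈ Finset.Icc 1 (N k ω), V k j ω‖} = 0 :=
  stmt_16_general P d hd V 𝓕 hFle hFmono b σ hb hσ hadapted hint hmean hintm hmom εlam lam0 ν hεlam
    hlam0 hν N hN
end
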